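/- arXiv:1612.03459 — 2 statements merged into one kernel-verified Lean document; each statement's English description precedes it below -/
import Mathlib

section
/- Let X, V, U₁,…,U_m, Y₁,…,Y_m be discrete random variables such that (Y₁,…,Y_m) ↔ X ↔ (V, U₁,…,U_m) is a Markov chain. Define for k ∈ {1,…,m}: Γ_k = Σ_{i=2}^{k} I(Y_i; V, U₁,…,U_{i-1} | Y₁,…,Y_{i-1}) + I(X; V, U₁,…,U_k | Y₁,…,Y_k) + Σ_{i=k+1}^{m} I(X; U_i | V, U₁,…,U_{i-1}, Y₁,…,Y_i). Then Γ₁ = Γ₂ = ⋯ = Γ_m. -/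
open scoped BigOperators Classical

/-- Probability that the random variable `f` takes the value `a`, for a finite
probability space given by the weight function `p`. -/
noncomputable def probOf {Ω α : Type*} [Fintype Ω] (p : Ω → ℝ) (f : Ω → α) (a : α) : ℝ :=
  ∑ ω ∈ Finset.univ.filter fun ω => f ω = a, p ω

/-- Shannon entropy (natural logarithm) of a discrete random variable. -/
noncomputable def ent {Ω α : Type*} [Fintype Ω] [Fintype α] (p : Ω → ℝ) (f : Ω → α) : ℝ :=
  -∑ a : α, probOf p f a * Real.log (probOf p f a)

/-- Conditional entropy H(X | Z). -/
noncomputable def condEnt {Ω α γ : Type*} [Fintype Ω] [Fintype α] [Fintype γ]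
    (p : Ω → ℝ) (X : Ω → α) (Z : Ω → γ) : ℝ :=
  ent p (fun ω => (X ω, Z ω)) - ent p Z

/-- Conditional mutual information I(X ; Y | Z). -/
noncomputable def cmi {Ω α β γ : Type*} [Fintype Ω] [Fintype α] [Fintype β] [Fintype γ]
    (p : Ω → ℝ) (X : Ω → α) (Y : Ω → β) (Z : Ω → γ) : ℝ :=
  ent p (fun ω => (X ω, Z ω)) + ent p (fun ω => (Y ω, Z ω))
    - ent p (fun ω => (X ω, Y ω, Z ω)) - ent p Z

/-- Mutual information I(X ; Y). -/
noncomputable def mi {Ω α β : Type*} [Fintype Ω] [Fintype α] [Fintype β]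
    (p : Ω → ℝ) (X : Ω → α) (Y : Ω → β) : ℝ :=
  cmi p X Y (fun _ => (() : Unit))

/-- `X` and `Y` are conditionally independent given `Z` (Markov chain X ↔ Z ↔ Y). -/
def CondIndepRV {Ω α β γ : Type*} [Fintype Ω]
    (p : Ω → ℝ) (X : Ω → α) (Y : Ω → β) (Z : Ω → γ) : Prop :=
  ∀ (a : α) (b : β) (c : γ),
    probOf p (fun ω => (X ω, Y ω, Z ω)) (a, b, c) * probOf p Z c =
      probOf p (fun ω => (X ω, Z ω)) (a, c) * probOf p (fun ω => (Y ω, Z ω)) (b, c)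

/-- The first `i` coordinates of a tuple of random variables, as a single random
variable (the remaining coordinates are masked by `none`). -/
noncomputable def preRV {Ω α : Type*} {m : ℕ} (U : Fin m → Ω → α) (i : ℕ) :
    Ω → (Fin m → Option α) :=
  fun ω j => if (j : ℕ) < i then some (U j ω) else none

/-- The quantity `Γ_k` from the proof of Theorem 6 (comparison with the minimax bound).
Indices are 0-based: `Γ k` corresponds to `Γ_k` with `k ∈ {1,…,m}` in the paper. -/
noncomputable def GammaRD {Ω 𝒳 𝒱 𝒰 𝒴 : Type*} [Fintype Ω] [Fintype 𝒳] [Fintype 𝒱]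
    [Fintype 𝒰] [Fintype 𝒴] {m : ℕ}
    (p : Ω → ℝ) (X : Ω → 𝒳) (V : Ω → 𝒱) (U : Fin m → Ω → 𝒰) (Y : Fin m → Ω → 𝒴)
    (k : ℕ) : ℝ :=
  (∑ i : Fin m, if 1 ≤ (i : ℕ) ∧ (i : ℕ) < k then
      cmi p (Y i) (fun ω => (V ω, preRV U (i : ℕ) ω)) (preRV Y (i : ℕ)) else 0)
  + cmi p X (fun ω => (V ω, preRV U k ω)) (preRV Y k)
  + (∑ i : Fin m, if k ≤ (i : ℕ) then
      cmi p X (U i) (fun ω => (V ω, preRV U (i : ℕ) ω, preRV Y ((i : ℕ) + 1) ω)) else 0)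

/-!
Splitting off `U_{k+1}` by the chain rule turns `Γ_{k+1} - Γ_k` into
`I(Y_{k+1}; W | Y^k) + I(X; W | Y^{k+1}) - I(X; W | Y^k)` with `W = (V, U^k)`. Both
`I(Y_{k+1}; W | Y^k) + I(X; W | Y_{k+1}, Y^k)` and `I(X; W | Y^k) + I(Y_{k+1}; W | X, Y^k)` are
chain-rule expansions of `I(X, Y_{k+1}; W | Y^k)`, and the last term vanishes by the Markov chain.
Entropy only depends on the partition of `Ω` into level sets of a random variable, so all the
regroupings of tuples this needs are free.
-/

section Distribution

variable {Ω α β γ : Type*} [Fintype Ω] (p : Ω → ℝ)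

lemma probOf_congr {F : Ω → α} {G : Ω → β} {a : α} {b : β} (h : ∀ ω, F ω = a ↔ G ω = b) :
    probOf p F a = probOf p G b := by
  simp only [probOf, h]

lemma le_probOf_apply (hp0 : ∀ ω, 0 ≤ p ω) (F : Ω → α) (ω : Ω) : p ω ≤ probOf p F (F ω) :=
  Finset.single_le_sum (fun ω' _ => hp0 ω') (by simp)

lemma probOf_map_fst [Fintype α] {α' : Type*} (f : α → α') (A : Ω → α) (R : Ω → β) (a' : α')
    (r : β) :
    probOf p (fun ω => (f (A ω), R ω)) (a', r)
      = ∑ a ∈ Finset.univ.filter (fun a => f a = a'), probOf p (fun ω => (A ω, R ω)) (a, r) := by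
  unfold probOf
  rw [← Finset.sum_fiberwise_of_maps_to (g := A) (t := Finset.univ.filter (fun a => f a = a'))
    (by simp +contextual)]
  refine Finset.sum_congr rfl fun a ha => Finset.sum_congr ?_ fun _ _ => rfl
  ext ω
  simp only [Finset.mem_filter, Finset.mem_univ, true_and, Prod.mk.injEq] at ha ⊢
  constructor
  · rintro ⟨⟨-, hR⟩, hA⟩; exact ⟨hA, hR⟩
  · rintro ⟨hA, hR⟩; exact ⟨⟨hA ▸ ha, hR⟩, hA⟩

namespace CondIndepRV

variable {p} {A : Ω → α} {B : Ω → β} {Z : Ω → γ}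

lemma symm (h : CondIndepRV p A B Z) : CondIndepRV p B A Z := by
  intro b a c
  rw [probOf_congr p (G := fun ω => (A ω, B ω, Z ω)) (b := (a, b, c)) (by simp; tauto),
    h a b c, mul_comm]

lemma comp_left [Fintype α] {α' : Type*} (f : α → α') (h : CondIndepRV p A B Z) :
    CondIndepRV p (fun ω => f (A ω)) B Z := by
  intro a' b c
  rw [probOf_map_fst p f A (fun ω => (B ω, Z ω)), probOf_map_fst p f A Z, Finset.sum_mul,
    Finset.sum_mul]
  exact Finset.sum_congr rfl fun a _ => h a b c

lemma comp [Fintype α] [Fintype β] {α' β' : Type*} (f : α → α') (g : β → β')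
    (h : CondIndepRV p A B Z) :
    CondIndepRV p (fun ω => f (A ω)) (fun ω => g (B ω)) Z :=
  (h.symm.comp_left g).symm.comp_left f

end CondIndepRV

end Distribution

section Entropy

variable {Ω α β γ δ : Type*} [Fintype Ω] [Fintype α] [Fintype β] [Fintype γ] [Fintype δ]
  (p : Ω → ℝ)

lemma ent_eq_neg_sum_log_probOf (F : Ω → α) :
    ent p F = -∑ ω, p ω * Real.log (probOf p F (F ω)) := by
  rw [ent, ← Finset.sum_fiberwise Finset.univ F]
  refine congrArg _ (Finset.sum_congr rfl fun a _ => ?_)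
  calc probOf p F a * Real.log (probOf p F a)
      = ∑ ω ∈ Finset.univ.filter (F · = a), p ω * Real.log (probOf p F a) := Finset.sum_mul ..
    _ = _ := Finset.sum_congr rfl fun ω hω => by rw [(Finset.mem_filter.1 hω).2]

lemma ent_congr {F : Ω → α} {G : Ω → β} (h : ∀ ω ω', F ω = F ω' ↔ G ω = G ω') :
    ent p F = ent p G := by
  simp only [ent_eq_neg_sum_log_probOf, probOf_congr p fun ω' => h ω' _]

variable {A : Ω → α} {B : Ω → β} {C : Ω → δ} {Z : Ω → γ}

lemma cmi_congr {α' β' γ' : Type*} [Fintype α'] [Fintype β'] [Fintype γ']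
    {A' : Ω → α'} {B' : Ω → β'} {Z' : Ω → γ'} (hA : ∀ ω ω', A ω = A ω' ↔ A' ω = A' ω')
    (hB : ∀ ω ω', B ω = B ω' ↔ B' ω = B' ω') (hZ : ∀ ω ω', Z ω = Z ω' ↔ Z' ω = Z' ω') :
    cmi p A B Z = cmi p A' B' Z' := by
  unfold cmi
  congr 3 <;> exact ent_congr p fun ω ω' => by simp only [Prod.mk.injEq, hA, hB, hZ]

lemma cmi_comm : cmi p A B Z = cmi p B A Z := by
  unfold cmi
  rw [ent_congr p (F := fun ω => (A ω, B ω, Z ω)) (G := fun ω => (B ω, A ω, Z ω))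
    fun ω ω' => by simp only [Prod.mk.injEq]; tauto]
  ring

lemma cmi_prod_left :
    cmi p (fun ω => (A ω, B ω)) C Z = cmi p A C Z + cmi p B C (fun ω => (A ω, Z ω)) := by
  unfold cmi
  rw [ent_congr p (F := fun ω => ((A ω, B ω), Z ω)) (G := fun ω => (B ω, A ω, Z ω))
      fun ω ω' => by simp only [Prod.mk.injEq]; tauto,
    ent_congr p (F := fun ω => ((A ω, B ω), C ω, Z ω)) (G := fun ω => (B ω, C ω, A ω, Z ω))
      fun ω ω' => by simp only [Prod.mk.injEq]; tauto,
    ent_congr p (F := fun ω => (C ω, A ω, Z ω)) (G := fun ω => (A ω, C ω, Z ω))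
      fun ω ω' => by simp only [Prod.mk.injEq]; tauto]
  ring

lemma cmi_prod_right :
    cmi p A (fun ω => (B ω, C ω)) Z = cmi p A B Z + cmi p A C (fun ω => (B ω, Z ω)) := by
  rw [cmi_comm, cmi_prod_left, cmi_comm p (A := B), cmi_comm p (A := C)]

/-- Both sides are chain-rule expansions of `I(A, B; C | Z)`. -/
lemma cmi_add_cmi_prod_eq (h : cmi p B C (fun ω => (A ω, Z ω)) = 0) :
    cmi p B C Z + cmi p A C (fun ω => (B ω, Z ω)) = cmi p A C Z := by
  have hAB := cmi_prod_left p (A := A) (B := B) (C := C) (Z := Z)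
  have hBA := cmi_prod_left p (A := B) (B := A) (C := C) (Z := Z)
  have hswap : cmi p (fun ω => (A ω, B ω)) C Z = cmi p (fun ω => (B ω, A ω)) C Z :=
    cmi_congr p (fun ω ω' => by simp only [Prod.mk.injEq]; tauto) (fun _ _ => Iff.rfl)
      (fun _ _ => Iff.rfl)
  linarith

lemma cmi_eq_zero_of_condIndepRV (hp0 : ∀ ω, 0 ≤ p ω) (h : CondIndepRV p A B Z) :
    cmi p A B Z = 0 := by
  have hlog : ∀ ω, p ω * (Real.log (probOf p (fun ω => (A ω, Z ω)) (A ω, Z ω))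
        + Real.log (probOf p (fun ω => (B ω, Z ω)) (B ω, Z ω)))
      = p ω * (Real.log (probOf p (fun ω => (A ω, B ω, Z ω)) (A ω, B ω, Z ω))
        + Real.log (probOf p Z (Z ω))) := by
    intro ω
    rcases (hp0 ω).eq_or_lt with hp | hp
    · simp [← hp]
    have hABZ := hp.trans_le (le_probOf_apply p hp0 (fun ω => (A ω, B ω, Z ω)) ω)
    have hZ := hp.trans_le (le_probOf_apply p hp0 Z ω)
    have hprod := h (A ω) (B ω) (Z ω)
    have hAZBZ : probOf p (fun ω => (A ω, Z ω)) (A ω, Z ω)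
        * probOf p (fun ω => (B ω, Z ω)) (B ω, Z ω) ≠ 0 := hprod ▸ (mul_pos hABZ hZ).ne'
    rw [← Real.log_mul (left_ne_zero_of_mul hAZBZ) (right_ne_zero_of_mul hAZBZ), ← hprod,
      Real.log_mul hABZ.ne' hZ.ne']
  have hsum := Finset.sum_congr rfl fun ω (_ : ω ∈ Finset.univ) => hlog ω
  simp only [mul_add, Finset.sum_add_distrib] at hsum
  rw [cmi, ent_eq_neg_sum_log_probOf, ent_eq_neg_sum_log_probOf, ent_eq_neg_sum_log_probOf,
    ent_eq_neg_sum_log_probOf]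
  linarith

end Entropy

-- `preRV W k ω` is definitionally `truncate k (fun j => W j ω)`.
def truncate {α : Type*} {m : ℕ} (k : ℕ) (y : Fin m → α) : Fin m → Option α :=
  fun j => if (j : ℕ) < k then some (y j) else none

lemma preRV_succ_eq_iff {Ω α : Type*} {m : ℕ} (W : Fin m → Ω → α) {k : ℕ} (hk : k < m)
    (ω ω' : Ω) :
    preRV W (k + 1) ω = preRV W (k + 1) ω'
      ↔ W ⟨k, hk⟩ ω = W ⟨k, hk⟩ ω' ∧ preRV W k ω = preRV W k ω' := by
  simp only [preRV, funext_iff]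
  constructor
  · intro h
    refine ⟨by simpa using h ⟨k, hk⟩, fun j => ?_⟩
    have := h j
    split_ifs at this ⊢ <;> first | rfl | omega
  · rintro ⟨hk', h⟩ j
    by_cases hj : (j : ℕ) = k
    · obtain rfl : j = ⟨k, hk⟩ := Fin.ext hj
      simp [hk']
    · have := h j
      split_ifs at this ⊢ <;> first | rfl | omega

lemma Fin.sum_ite_eq_sum_ite_add {M : Type*} [AddCommMonoid M] {m : ℕ} (f : Fin m → M)
    {P Q : Fin m → Prop} [DecidablePred P] [DecidablePred Q] (i₀ : Fin m)
    (hQ : ∀ i, Q i ↔ P i ∨ i = i₀) (hP : ¬ P i₀) :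
    ∑ i, (if Q i then f i else 0) = ∑ i, (if P i then f i else 0) + f i₀ := by
  rw [← Finset.sum_filter, ← Finset.sum_filter, add_comm, ← Finset.sum_insert (by simp [hP])]
  congr 1
  ext i
  simp [hQ, or_comm]

section Gamma

variable {Ω 𝒳 𝒱 𝒰 𝒴 : Type*} [Fintype Ω] [Fintype 𝒳] [Fintype 𝒱] [Fintype 𝒰] [Fintype 𝒴]
  {m : ℕ} (p : Ω → ℝ) (X : Ω → 𝒳) (V : Ω → 𝒱) (U : Fin m → Ω → 𝒰) (Y : Fin m → Ω → 𝒴)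

lemma cmi_eq_zero_of_markov (hp0 : ∀ ω, 0 ≤ p ω)
    (hMarkov : CondIndepRV p (fun ω (i : Fin m) => Y i ω)
      (fun ω => (V ω, fun i : Fin m => U i ω)) X) {k : ℕ} (hk : k < m) :
    cmi p (Y ⟨k, hk⟩) (fun ω => (V ω, preRV U k ω)) (fun ω => (X ω, preRV Y k ω)) = 0 := by
  have hnow : cmi p (fun ω => (preRV Y k ω, Y ⟨k, hk⟩ ω)) (fun ω => (V ω, preRV U k ω)) X = 0 :=
    cmi_eq_zero_of_condIndepRV p hp0 <| hMarkov.comp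
      (fun y => (truncate k y, y ⟨k, hk⟩)) (Prod.map id (truncate k))
  have hpast : cmi p (preRV Y k) (fun ω => (V ω, preRV U k ω)) X = 0 :=
    cmi_eq_zero_of_condIndepRV p hp0 <| hMarkov.comp
      (truncate k) (Prod.map id (truncate k))
  rw [cmi_congr p (fun _ _ => Iff.rfl) (fun _ _ => Iff.rfl)
    (Z' := fun ω => (preRV Y k ω, X ω)) fun ω ω' => by simp only [Prod.mk.injEq]; tauto]
  linarith [cmi_prod_left p (A := preRV Y k) (B := Y ⟨k, hk⟩)
    (C := fun ω => (V ω, preRV U k ω)) (Z := X)]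

lemma cmi_add_cmi_succ (hp0 : ∀ ω, 0 ≤ p ω)
    (hMarkov : CondIndepRV p (fun ω (i : Fin m) => Y i ω)
      (fun ω => (V ω, fun i : Fin m => U i ω)) X) {k : ℕ} (hk : k < m) :
    cmi p (Y ⟨k, hk⟩) (fun ω => (V ω, preRV U k ω)) (preRV Y k)
      + cmi p X (fun ω => (V ω, preRV U (k + 1) ω)) (preRV Y (k + 1))
    = cmi p X (fun ω => (V ω, preRV U k ω)) (preRV Y k)
      + cmi p X (U ⟨k, hk⟩) (fun ω => (V ω, preRV U k ω, preRV Y (k + 1) ω)) := by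
  have hY := preRV_succ_eq_iff Y hk
  have hU := preRV_succ_eq_iff U hk
  rw [cmi_congr p (A := X) (B := fun ω => (V ω, preRV U (k + 1) ω)) (fun _ _ => Iff.rfl)
      (B' := fun ω => ((V ω, preRV U k ω), U ⟨k, hk⟩ ω))
      (fun ω ω' => by simp only [Prod.mk.injEq, hU]; tauto)
      (Z' := fun ω => (Y ⟨k, hk⟩ ω, preRV Y k ω))
      (fun ω ω' => by simp only [Prod.mk.injEq, hY]),
    cmi_prod_right p (A := X) (B := fun ω => (V ω, preRV U k ω)),
    cmi_congr p (A := X) (B := U ⟨k, hk⟩) (Z := fun ω => (V ω, preRV U k ω, preRV Y (k + 1) ω))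
      (fun _ _ => Iff.rfl) (fun _ _ => Iff.rfl)
      (Z' := fun ω => ((V ω, preRV U k ω), Y ⟨k, hk⟩ ω, preRV Y k ω))
      (fun ω ω' => by simp only [Prod.mk.injEq, hY]; tauto),
    ← cmi_add_cmi_prod_eq p (cmi_eq_zero_of_markov p X V U Y hp0 hMarkov hk)]
  ring

lemma GammaRD_succ (hp0 : ∀ ω, 0 ≤ p ω)
    (hMarkov : CondIndepRV p (fun ω (i : Fin m) => Y i ω)
      (fun ω => (V ω, fun i : Fin m => U i ω)) X) {k : ℕ} (hk1 : 1 ≤ k) (hk : k < m) :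
    GammaRD p X V U Y (k + 1) = GammaRD p X V U Y k := by
  unfold GammaRD
  rw [Fin.sum_ite_eq_sum_ite_add _ ⟨k, hk⟩ (P := fun i : Fin m => 1 ≤ (i : ℕ) ∧ (i : ℕ) < k)
      (fun i => by simp only [Fin.ext_iff]; omega) (by simp),
    Fin.sum_ite_eq_sum_ite_add (Q := fun i : Fin m => k ≤ (i : ℕ)) _ ⟨k, hk⟩
      (P := fun i : Fin m => k + 1 ≤ (i : ℕ)) (fun i => by simp only [Fin.ext_iff]; omega)
      (by simp)]
  linarith [cmi_add_cmi_succ p X V U Y hp0 hMarkov hk]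

end Gamma

theorem stmt_4_general {Ω 𝒳 𝒱 𝒰 𝒴 : Type*} [Fintype Ω] [Fintype 𝒳] [Fintype 𝒱]
    [Fintype 𝒰] [Fintype 𝒴] (m : ℕ)
    (p : Ω → ℝ) (hp0 : ∀ ω, 0 ≤ p ω)
    (X : Ω → 𝒳) (V : Ω → 𝒱) (U : Fin m → Ω → 𝒰) (Y : Fin m → Ω → 𝒴)
    (hMarkov : CondIndepRV p (fun ω (i : Fin m) => Y i ω)
      (fun ω => (V ω, fun i : Fin m => U i ω)) X) :
    ∀ k : ℕ, 1 ≤ k → k ≤ m → GammaRD p X V U Y k = GammaRD p X V U Y 1 := by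
  intro k hk1
  induction k, hk1 using Nat.le_induction with
  | base => intro _; rfl
  | succ k hk1 ih =>
    intro hk
    rw [GammaRD_succ p X V U Y hp0 hMarkov hk1 hk, ih (by omega)]

/-- under the Markov chain `(Y₁,…,Y_m) ↔ X ↔ (V, U₁,…,U_m)`,
the quantities `Γ₁ = Γ₂ = ⋯ = Γ_m` all coincide. -/
theorem stmt_4 {Ω 𝒳 𝒱 𝒰 𝒴 : Type*} [Fintype Ω] [Fintype 𝒳] [Fintype 𝒱]
    [Fintype 𝒰] [Fintype 𝒴] (m : ℕ)
    (p : Ω → ℝ) (hp0 : ∀ ω, 0 ≤ p ω) (hp1 : ∑ ω, p ω = 1)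
    (X : Ω → 𝒳) (V : Ω → 𝒱) (U : Fin m → Ω → 𝒰) (Y : Fin m → Ω → 𝒴)
    (hMarkov : CondIndepRV p (fun ω (i : Fin m) => Y i ω)
      (fun ω => (V ω, fun i : Fin m => U i ω)) X) :
    ∀ k : ℕ, 1 ≤ k → k ≤ m → GammaRD p X V U Y k = GammaRD p X V U Y 1 :=
  stmt_4_general m p hp0 X V U Y hMarkov
end

section
/- For m ≥ 5 odd, consider the odd-cycle Gaussian problem: the rate-distortion function satisfies the converse bound 2·K(∅) ≥ m·R(D) where R(D) = (1/2)log(1/D), derived from the seven inequalities: K(∅) ≥ K(O), K(∅) ≥ K(E), K(∅) ≥ K(X_m); K(O) ≥ K(O⁺) + |O⁺∖O|·R(D); K(E) ≥ K(E⁺) + |E⁺∖E|·R(D); K(O⁺)+K(E⁺) ≥ K(M)+K(X)+R(D); K(M)+K(X_m) ≥ K(∅)+K(X)+|S|·R(D); K(X)=0. Summing these side-by-side with |O⁺∖O| + |E⁺∖E| + 1 + |S| = m yields 2K(∅) ≥ m·R(D). -/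
lemma aux_even_card (n : ℕ) :
    ((Finset.Icc 1 n).filter (fun i => i % 2 = 0)).card = n / 2 := by
  have h : (Finset.Icc 1 n).filter (fun i => i % 2 = 0)
      = (Finset.Icc 1 (n / 2)).image (fun k => 2 * k) := by
    ext a
    simp only [Finset.mem_filter, Finset.mem_Icc, Finset.mem_image]
    constructor
    · rintro ⟨⟨h1, h2⟩, h3⟩
      exact ⟨a / 2, by omega, by omega⟩
    · rintro ⟨k, hk, rfl⟩
      omega
  rw [h, Finset.card_image_of_injective _ (fun a b => by omega)]
  simp

lemma aux_odd_card (m : ℕ) (hm : 5 ≤ m) (hmo : m % 2 = 1) :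
    ((Finset.Icc 2 (m - 1)).filter (fun i => i % 2 = 1)).card = (m - 3) / 2 := by
  have h : (Finset.Icc 2 (m - 1)).filter (fun i => i % 2 = 1)
      = (Finset.Icc 1 ((m - 3) / 2)).image (fun k => 2 * k + 1) := by
    ext a
    simp only [Finset.mem_filter, Finset.mem_Icc, Finset.mem_image]
    constructor
    · rintro ⟨⟨h1, h2⟩, h3⟩
      exact ⟨a / 2, by omega, by omega⟩
    · rintro ⟨k, hk, rfl⟩
      omega
  rw [h, Finset.card_image_of_injective _ (fun a b => by omega)]
  simp

/-- converse for the odd-cycle Gaussian problem. With source components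
indexed by `{1,…,m}` (`m ≥ 5` odd), the sets `O, O⁺, E, E⁺, M, S` as in the paper, and
any `K` on subsets satisfying the seven LP inequalities with per-component rate
`R(D) = (1/2)·log(1/D)`, summing them side-by-side yields `2·K(∅) ≥ m·R(D)`. -/
theorem stmt_18 (m : ℕ) (hm : 5 ≤ m) (hodd : Odd m)
    (D : ℝ) (hD0 : 0 < D) (hD1 : D < 1)
    (K : Finset ℕ → ℝ) :
    let R : ℝ := (1 / 2) * Real.log (1 / D)
    let Xs : Finset ℕ := Finset.Icc 1 m
    let O : Finset ℕ := Xs.filter fun i => i % 2 = 1 ∧ i ≠ m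
    let Op : Finset ℕ := Finset.Icc 1 (m - 2)
    let E : Finset ℕ := Xs.filter fun i => i % 2 = 0
    let Ep : Finset ℕ := Finset.Icc 2 (m - 1)
    let M : Finset ℕ := Finset.Icc 2 (m - 2)
    let S : Finset ℕ := Xs \ (M ∪ {m})
    K Xs = 0 →
    K ∅ ≥ K O →
    K ∅ ≥ K E →
    K ∅ ≥ K {m} →
    K O ≥ K Op + ((Op \ O).card : ℝ) * R →
    K E ≥ K Ep + ((Ep \ E).card : ℝ) * R →
    K Op + K Ep ≥ K M + K Xs + R →
    K M + K {m} ≥ K ∅ + K Xs + (S.card : ℝ) * R →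
    2 * K ∅ ≥ (m : ℝ) * R := by
  intro R Xs O Op E Ep M S h0 h1 h2 h3 h4 h5 h6 h7
  have hmo : m % 2 = 1 := Nat.odd_iff.mp hodd
  have hc1 : (Op \ O).card = (m - 3) / 2 := by
    have h : Op \ O = (Finset.Icc 1 (m - 2)).filter (fun i => i % 2 = 0) := by
      ext a
      simp only [Op, O, Xs, Finset.mem_sdiff, Finset.mem_filter, Finset.mem_Icc,
        not_and, ne_eq, not_not]
      constructor
      · rintro ⟨⟨ha1, ha2⟩, ha3⟩
        refine ⟨⟨ha1, ha2⟩, ?_⟩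
        by_contra h'
        have := ha3 ⟨ha1, by omega⟩ (by omega)
        omega
      · rintro ⟨⟨ha1, ha2⟩, ha3⟩
        exact ⟨⟨ha1, ha2⟩, fun _ h' => by omega⟩
    rw [h, aux_even_card]
    omega
  have hc2 : (Ep \ E).card = (m - 3) / 2 := by
    have h : Ep \ E = (Finset.Icc 2 (m - 1)).filter (fun i => i % 2 = 1) := by
      ext a
      simp only [Ep, E, Xs, Finset.mem_sdiff, Finset.mem_filter, Finset.mem_Icc, not_and]
      constructor
      · rintro ⟨⟨ha1, ha2⟩, ha3⟩
        refine ⟨⟨ha1, ha2⟩, ?_⟩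
        by_contra h'
        have := ha3 ⟨by omega, by omega⟩
        omega
      · rintro ⟨⟨ha1, ha2⟩, ha3⟩
        exact ⟨⟨ha1, ha2⟩, fun _ => by omega⟩
    rw [h, aux_odd_card m hm hmo]
  have hS : S.card = 2 := by
    have h : S = {1, m - 1} := by
      ext a
      simp only [S, Xs, M, Finset.mem_sdiff, Finset.mem_union, Finset.mem_Icc,
        Finset.mem_singleton, Finset.mem_insert, not_or, not_and]
      omega
    rw [h]
    rw [Finset.card_insert_of_notMem (by simp; omega), Finset.card_singleton]
  have hsum : ((Op \ O).card : ℝ) + ((Ep \ E).card : ℝ) + 1 + (S.card : ℝ) = (m : ℝ) := by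
    rw [hc1, hc2, hS]
    have hn : (m - 3) / 2 + (m - 3) / 2 + 1 + 2 = m := by omega
    exact_mod_cast hn
  have hmul : ((Op \ O).card : ℝ) * R + ((Ep \ E).card : ℝ) * R + R + (S.card : ℝ) * R
      = (m : ℝ) * R := by rw [← hsum]; ring
  linarith
end
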